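/- The map φ from zigzag knight's paths ending on the x-axis to Dyck paths, defined by φ(ε)=UD, φ(E Ē β)=U φ(β) D, φ(N N̄ β)=U D φ(β), φ(N Ē β E N̄ γ)=U φ(β) D φ(γ), is injective. -/

import Mathlib

open List

/-- The four right-moves of a knight. -/
def KnightSteps : Set (ℤ × ℤ) := {(2,1), (2,-1), (1,2), (1,-2)}

/-- All partial sums of the y-coordinates are nonnegative (the path stays in ℕ²). -/
def NonnegHeights (p : List (ℤ × ℤ)) : Prop :=
  ∀ i, 0 ≤ ((p.take i).map Prod.snd).sum

/-- A partial knight's path: steps from `KnightSteps`, never going below the x-axis. -/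
def IsPartialKnight (p : List (ℤ × ℤ)) : Prop :=
  (∀ s ∈ p, s ∈ KnightSteps) ∧ NonnegHeights p

/-- Any two consecutive steps have vertical components of opposite sign. -/
def IsZigzag (p : List (ℤ × ℤ)) : Prop :=
  List.Chain' (fun a b => a.2 * b.2 < 0) p

/-- A partial zigzag knight's path. -/
def IsPartialZigzag (p : List (ℤ × ℤ)) : Prop :=
  IsPartialKnight p ∧ IsZigzag p

/-- The height of the endpoint of a path. -/
def pathHeight (p : List (ℤ × ℤ)) : ℤ := (p.map Prod.snd).sum

/-- The size (x-coordinate of the endpoint) of a path. -/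
def pathSize (p : List (ℤ × ℤ)) : ℤ := (p.map Prod.fst).sum

/-- A zigzag knight's path ending on the x-axis. -/
def IsZigzagKnightPath (p : List (ℤ × ℤ)) : Prop :=
  IsPartialZigzag p ∧ pathHeight p = 0

/-- The last step of `p` exists and is an up-step. -/
def EndsWithUp (p : List (ℤ × ℤ)) : Prop :=
  ∃ s, p.getLast? = some s ∧ 0 < s.2

/-- The last step of `p` exists and is a down-step. -/
def EndsWithDown (p : List (ℤ × ℤ)) : Prop :=
  ∃ s, p.getLast? = some s ∧ s.2 < 0

def Estep : ℤ × ℤ := (2, 1)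
def Ebar  : ℤ × ℤ := (2, -1)
def Nstep : ℤ × ℤ := (1, 2)
def Nbar  : ℤ × ℤ := (1, -2)

/-- A Dyck path, encoded as a list of steps `1 = U` and `-1 = D` with nonnegative
partial sums, ending at height 0. -/
def IsDyck (d : List ℤ) : Prop :=
  (∀ x ∈ d, x = 1 ∨ x = -1) ∧ (∀ i, 0 ≤ (d.take i).sum) ∧ d.sum = 0

/-! Writing `A, B` for the images of the two (possibly missing) parts of the decomposition,
every `φ p` has the shape `U A D B` with `A`, `B` Dyck, a missing part giving the empty path.
Since `φ` never returns the empty path, `A` and `B` record which of the four forms `p` has,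
and since the first-return decomposition `U A D B` of a Dyck path is unique, injectivity
follows by induction on the length of the path.

The decomposition itself: after an initial `N Ē` the path sits at height `1`, and the first
step that takes it below height `1` must be an `N̄` preceded by an `E` starting from height `1`,
because steps alternate in sign and never go below the x-axis. -/

@[simp] lemma pathHeight_nil : pathHeight [] = 0 := rfl

@[simp] lemma pathHeight_cons (s : ℤ × ℤ) (l : List (ℤ × ℤ)) :
    pathHeight (s :: l) = s.2 + pathHeight l := by
  simp [pathHeight]

@[simp] lemma pathHeight_append (l₁ l₂ : List (ℤ × ℤ)) :
    pathHeight (l₁ ++ l₂) = pathHeight l₁ + pathHeight l₂ := by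
  simp [pathHeight]

lemma le_pathHeight_take_of_append {l₁ l₂ : List (ℤ × ℤ)} {c : ℤ}
    (h : ∀ n, c ≤ pathHeight ((l₁ ++ l₂).take n)) (n : ℕ) :
    c - pathHeight l₁ ≤ pathHeight (l₂.take n) := by
  have := h (l₁.length + n)
  rw [take_length_add_append, pathHeight_append] at this
  linarith

lemma exists_first_passage {L : List (ℤ × ℤ)} {c : ℤ}
    (hge : ∀ n, c ≤ pathHeight (L.take n)) (hL : pathHeight L = c) :
    ∃ P γ, L = P ++ γ ∧ pathHeight P = c ∧
      ∀ q, q <+: P → q.length < P.length → c < pathHeight q := by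
  have hex : ∃ k, pathHeight (L.take k) = c := ⟨L.length, by rwa [take_length]⟩
  refine ⟨L.take (Nat.find hex), L.drop (Nat.find hex), (take_append_drop _ _).symm,
    Nat.find_spec hex, fun q hq hlt => ?_⟩
  rw [prefix_iff_eq_take.mp hq, take_take] at hlt ⊢
  have hq_lt : min q.length (Nat.find hex) < Nat.find hex := by
    simp only [length_take] at hlt
    omega
  exact lt_of_le_of_ne (hge _) (Ne.symm (Nat.find_min hex hq_lt))

lemma snd_ne_zero_of_mem_knightSteps {s : ℤ × ℤ} (hs : s ∈ KnightSteps) : s.2 ≠ 0 := by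
  rcases hs with rfl | rfl | rfl | rfl <;> decide

lemma first_two_steps_cases {a b : ℤ × ℤ} (ha : a ∈ KnightSteps) (hb : b ∈ KnightSteps)
    (hab : a.2 * b.2 < 0) (h₁ : 0 ≤ a.2) (h₂ : 0 ≤ a.2 + b.2) :
    (a = Estep ∧ b = Ebar) ∨ (a = Nstep ∧ b = Nbar) ∨ (a = Nstep ∧ b = Ebar) := by
  rcases ha with rfl | rfl | rfl | rfl <;> rcases hb with rfl | rfl | rfl | rfl <;>
    simp_all [Estep, Ebar, Nstep, Nbar]

lemma last_two_steps_of_first_passage {x y : ℤ × ℤ} {c : ℤ} (hx : x ∈ KnightSteps)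
    (hy : y ∈ KnightSteps) (hxy : x.2 * y.2 < 0) (h₀ : 0 ≤ c) (h₁ : 0 ≤ c + x.2)
    (h₂ : c + x.2 + y.2 = -1) : x = Estep ∧ y = Nbar ∧ c = 0 := by
  rcases hx with rfl | rfl | rfl | rfl <;> rcases hy with rfl | rfl | rfl | rfl <;>
    simp_all [Estep, Nbar] <;> omega

lemma IsPartialZigzag.isZigzagKnightPath_of_infix {p l : List (ℤ × ℤ)}
    (hp : IsPartialZigzag p) (hl : l <:+: p) (hh : NonnegHeights l) (h₀ : pathHeight l = 0) :
    IsZigzagKnightPath l :=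
  ⟨⟨⟨fun s hs => hp.1.1 s (hl.subset hs), hh⟩, List.IsChain.infix hp.2 hl⟩, h₀⟩

lemma IsZigzagKnightPath.exists_split_of_nstep_ebar {L : List (ℤ × ℤ)}
    (hp : IsZigzagKnightPath (Nstep :: Ebar :: L)) :
    ∃ β γ, IsZigzagKnightPath β ∧ IsZigzagKnightPath γ ∧ L = β ++ Estep :: Nbar :: γ := by
  have hpz := hp.1
  obtain ⟨⟨⟨hmem, hnn⟩, hzz⟩, hh⟩ := hp
  have hge : ∀ n, -1 ≤ pathHeight (L.take n) :=
    le_pathHeight_take_of_append (l₁ := [Nstep, Ebar]) hnn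
  have hL : pathHeight L = -1 := by
    simp only [pathHeight_cons, Nstep, Ebar] at hh
    linarith
  obtain ⟨P, γ, rfl, hP, hfirst⟩ := exists_first_passage hge hL
  rcases P.eq_nil_or_concat' with rfl | ⟨P₁, y, rfl⟩
  · simp at hP
  rcases P₁.eq_nil_or_concat' with rfl | ⟨β, x, rfl⟩
  · -- a first step down from height `1` would break the zigzag condition after `Ē`
    simp only [nil_append, singleton_append] at hzz
    have hy : Ebar.2 * y.2 < 0 := (isChain_cons_cons.mp (isChain_cons_cons.mp hzz).2).1
    simp only [pathHeight_append, pathHeight_cons, pathHeight_nil] at hP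
    simp only [Ebar] at hy
    omega
  have hβ : -1 < pathHeight β := hfirst β ⟨[x, y], by simp⟩ (by simp)
  have hβx : -1 < pathHeight (β ++ [x]) := hfirst _ (prefix_append _ _) (by simp)
  have hxy : x.2 * y.2 < 0 := by
    have hinfix : [x, y] <:+: Nstep :: Ebar :: (β ++ [x] ++ [y] ++ γ) :=
      ⟨Nstep :: Ebar :: β, γ, by simp⟩
    exact (isChain_pair (R := fun a b : ℤ × ℤ => a.2 * b.2 < 0)).mp (hzz.infix hinfix)
  have hxy_height : pathHeight β + x.2 + y.2 = -1 := by
    simp only [pathHeight_append, pathHeight_cons, pathHeight_nil, add_zero] at hP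
    linarith
  simp only [pathHeight_append, pathHeight_cons, pathHeight_nil, add_zero] at hβx
  obtain ⟨rfl, rfl, hβ₀⟩ := last_two_steps_of_first_passage (c := pathHeight β)
    (hmem x (by simp)) (hmem y (by simp)) hxy (by omega) (by omega) hxy_height
  refine ⟨β, γ,
    hpz.isZigzagKnightPath_of_infix ⟨[Nstep, Ebar], [Estep, Nbar] ++ γ, by simp⟩ (fun n => ?_) hβ₀,
    hpz.isZigzagKnightPath_of_infix ⟨Nstep :: Ebar :: β ++ [Estep, Nbar], [], by simp⟩
      (fun n => ?_) ?_, by simp⟩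
  · have := hfirst (β.take n) ((take_prefix n β).trans ⟨[Estep, Nbar], by simp⟩)
      (by simp only [length_take, length_append, length_singleton]; omega)
    show 0 ≤ pathHeight (β.take n)
    omega
  · show 0 ≤ pathHeight (γ.take n)
    have := le_pathHeight_take_of_append hge n
    rw [hP] at this
    linarith
  · rw [pathHeight_append, hP] at hL
    linarith

def zigzagJoin : Option (List (ℤ × ℤ)) → Option (List (ℤ × ℤ)) → List (ℤ × ℤ)
  | none, none => []
  | some β, none => Estep :: Ebar :: β
  | none, some γ => Nstep :: Nbar :: γ
  | some β, some γ => Nstep :: Ebar :: (β ++ Estep :: Nbar :: γ)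

lemma length_lt_length_zigzagJoin_left {β : List (ℤ × ℤ)} {o₁ : Option (List (ℤ × ℤ))}
    (hβ : β ∈ o₁) (o₂ : Option (List (ℤ × ℤ))) : β.length < (zigzagJoin o₁ o₂).length := by
  obtain rfl := Option.mem_def.mp hβ
  cases o₂ <;> simp only [zigzagJoin, length_cons, length_append] <;> omega

lemma length_lt_length_zigzagJoin_right {γ : List (ℤ × ℤ)} (o₁ : Option (List (ℤ × ℤ)))
    {o₂ : Option (List (ℤ × ℤ))} (hγ : γ ∈ o₂) : γ.length < (zigzagJoin o₁ o₂).length := by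
  obtain rfl := Option.mem_def.mp hγ
  cases o₁ <;> simp only [zigzagJoin, length_cons, length_append] <;> omega

lemma IsZigzagKnightPath.of_cons_cons {a b : ℤ × ℤ} {L : List (ℤ × ℤ)}
    (hp : IsZigzagKnightPath (a :: b :: L)) (hab : a.2 + b.2 = 0) : IsZigzagKnightPath L := by
  refine hp.1.isZigzagKnightPath_of_infix ⟨[a, b], [], by simp⟩ (fun n => ?_) ?_
  · show 0 ≤ pathHeight (L.take n)
    simpa [hab] using le_pathHeight_take_of_append (l₁ := [a, b]) hp.1.1.2 n
  · have hh := hp.2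
    simp only [pathHeight_cons] at hh
    linarith

lemma IsZigzagKnightPath.exists_eq_zigzagJoin {p : List (ℤ × ℤ)} (hp : IsZigzagKnightPath p) :
    ∃ o₁ o₂, (∀ β ∈ o₁, IsZigzagKnightPath β) ∧ (∀ γ ∈ o₂, IsZigzagKnightPath γ) ∧
      p = zigzagJoin o₁ o₂ := by
  rcases p with _ | ⟨a, _ | ⟨b, L⟩⟩
  · exact ⟨none, none, by simp, by simp, rfl⟩
  · exact absurd (by simpa using hp.2) (snd_ne_zero_of_mem_knightSteps (hp.1.1.1 a (by simp)))
  · have h₁ : 0 ≤ a.2 := by simpa using hp.1.1.2 1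
    have h₂ : 0 ≤ a.2 + b.2 := by simpa using hp.1.1.2 2
    have hab : a.2 * b.2 < 0 := (isChain_cons_cons.mp hp.1.2).1
    rcases first_two_steps_cases (hp.1.1.1 a (by simp)) (hp.1.1.1 b (by simp)) hab h₁ h₂ with
      ⟨rfl, rfl⟩ | ⟨rfl, rfl⟩ | ⟨rfl, rfl⟩
    · exact ⟨some L, none, by simpa using hp.of_cons_cons rfl, by simp, rfl⟩
    · exact ⟨none, some L, by simp, by simpa using hp.of_cons_cons rfl, rfl⟩
    · obtain ⟨β, γ, hβ, hγ, rfl⟩ := hp.exists_split_of_nstep_ebar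
      exact ⟨some β, some γ, by simpa using hβ, by simpa using hγ, rfl⟩

lemma isDyck_nil : IsDyck [] := ⟨by simp, by simp, by simp⟩

lemma isDyck_elim_nil {α : Type*} {f : α → List ℤ} {o : Option α} (hf : ∀ a ∈ o, IsDyck (f a)) :
    IsDyck (o.elim [] f) := by
  cases o <;> simp_all [isDyck_nil]

lemma IsDyck.one_cons_append_neg_one_cons {d e : List ℤ} (hd : IsDyck d) (he : IsDyck e) :
    IsDyck (1 :: (d ++ -1 :: e)) := by
  obtain ⟨hd₁, hd₂, hd₃⟩ := hd
  obtain ⟨he₁, he₂, he₃⟩ := he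
  refine ⟨?_, fun i => ?_, by simp [hd₃, he₃]⟩
  · simp only [mem_cons, mem_append]
    rintro x (rfl | hx | rfl | hx)
    exacts [Or.inl rfl, hd₁ x hx, Or.inr rfl, he₁ x hx]
  · cases i with
    | zero => simp
    | succ j =>
      rw [take_succ_cons, sum_cons, take_append, sum_append]
      have hdown : (-1 : ℤ) ≤ (((-1) :: e).take (j - d.length)).sum := by
        cases j - d.length with
        | zero => simp
        | succ k => simpa using he₂ k
      linarith [hd₂ j]

lemma IsDyck.length_le_of_append_neg_one_cons_eq {d d' e e' : List ℤ} (hd : IsDyck d)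
    (hd' : IsDyck d') (h : d ++ -1 :: e = d' ++ -1 :: e') : d.length ≤ d'.length := by
  by_contra! hlt
  -- the prefix of length `|d'| + 1` sums to `-1` on the right but is a prefix of `d` on the left
  have hsum := congrArg (fun l => (l.take (d'.length + 1)).sum) h
  simp only [take_append_of_le_length (by omega : d'.length + 1 ≤ d.length),
    take_length_add_append, sum_append, hd'.2.2, take_succ_cons, take_zero, sum_cons,
    sum_nil] at hsum
  linarith [hd.2.1 (d'.length + 1)]

lemma IsDyck.append_neg_one_cons_inj {d d' e e' : List ℤ} (hd : IsDyck d) (hd' : IsDyck d')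
    (h : d ++ -1 :: e = d' ++ -1 :: e') : d = d' ∧ e = e' := by
  have hlen : d.length = d'.length :=
    le_antisymm (hd.length_le_of_append_neg_one_cons_eq hd' h)
      (hd'.length_le_of_append_neg_one_cons_eq hd h.symm)
  obtain ⟨rfl, h'⟩ := append_inj h hlen
  exact ⟨rfl, (cons.inj h').2⟩

lemma eq_of_elim_nil_eq {α β : Type*} {f : α → List β} {o o' : Option α}
    (hf : ∀ a ∈ o, ∀ a' ∈ o', f a = f a' → a = a') (hne : ∀ a ∈ o, f a ≠ [])
    (hne' : ∀ a ∈ o', f a ≠ []) (h : o.elim [] f = o'.elim [] f) : o = o' := by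
  cases o <;> cases o' <;> simp_all

section FirstReturnCoding

def IsFirstReturnCoding (φ : List (ℤ × ℤ) → List ℤ) : Prop :=
  ∀ o₁ o₂, (∀ β ∈ o₁, IsZigzagKnightPath β) → (∀ γ ∈ o₂, IsZigzagKnightPath γ) →
    φ (zigzagJoin o₁ o₂) = 1 :: (o₁.elim [] φ ++ -1 :: o₂.elim [] φ)

variable {φ : List (ℤ × ℤ) → List ℤ}

lemma IsFirstReturnCoding.ne_nil (hφ : IsFirstReturnCoding φ) {p : List (ℤ × ℤ)}
    (hp : IsZigzagKnightPath p) : φ p ≠ [] := by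
  obtain ⟨o₁, o₂, h₁, h₂, rfl⟩ := hp.exists_eq_zigzagJoin
  simp [hφ o₁ o₂ h₁ h₂]

theorem IsFirstReturnCoding.isDyck (hφ : IsFirstReturnCoding φ) {p : List (ℤ × ℤ)}
    (hp : IsZigzagKnightPath p) : IsDyck (φ p) := by
  obtain ⟨o₁, o₂, h₁, h₂, hpeq⟩ := hp.exists_eq_zigzagJoin
  rw [hpeq, hφ o₁ o₂ h₁ h₂]
  exact (isDyck_elim_nil fun β hβ => hφ.isDyck (h₁ β hβ)).one_cons_append_neg_one_cons
    (isDyck_elim_nil fun γ hγ => hφ.isDyck (h₂ γ hγ))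
termination_by p.length
decreasing_by
  · rw [hpeq]; exact length_lt_length_zigzagJoin_left hβ o₂
  · rw [hpeq]; exact length_lt_length_zigzagJoin_right o₁ hγ

theorem IsFirstReturnCoding.injOn (hφ : IsFirstReturnCoding φ) :
    Set.InjOn φ {p | IsZigzagKnightPath p} := by
  intro p hp q hq h
  obtain ⟨o₁, o₂, h₁, h₂, hpeq⟩ := IsZigzagKnightPath.exists_eq_zigzagJoin hp
  obtain ⟨o₁', o₂', h₁', h₂', rfl⟩ := IsZigzagKnightPath.exists_eq_zigzagJoin hq
  rw [hpeq, hφ _ _ h₁ h₂, hφ _ _ h₁' h₂'] at h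
  obtain ⟨e₁, e₂⟩ := (isDyck_elim_nil fun β hβ => hφ.isDyck (h₁ β hβ)).append_neg_one_cons_inj
    (isDyck_elim_nil fun β hβ => hφ.isDyck (h₁' β hβ)) (cons.inj h).2
  rw [hpeq,
    eq_of_elim_nil_eq (fun β hβ β' hβ' => hφ.injOn (h₁ β hβ) (h₁' β' hβ'))
      (fun β hβ => hφ.ne_nil (h₁ β hβ)) (fun β hβ => hφ.ne_nil (h₁' β hβ)) e₁,
    eq_of_elim_nil_eq (fun γ hγ γ' hγ' => hφ.injOn (h₂ γ hγ) (h₂' γ' hγ'))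
      (fun γ hγ => hφ.ne_nil (h₂ γ hγ)) (fun γ hγ => hφ.ne_nil (h₂' γ hγ)) e₂]
termination_by p => p.length
decreasing_by
  · rw [hpeq]; exact length_lt_length_zigzagJoin_left hβ o₂
  · rw [hpeq]; exact length_lt_length_zigzagJoin_right o₁ hγ

end FirstReturnCoding

/-- the map φ with φ(ε)=UD, φ(E Ē β)=U φ(β) D, φ(N N̄ β)=U D φ(β),
φ(N Ē β E N̄ γ)=U φ(β) D φ(γ), from zigzag knight's paths ending on the x-axis to
Dyck paths, is injective. -/
theorem stmt17 (φ : List (ℤ × ℤ) → List ℤ)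
    (h0 : φ [] = [1, -1])
    (h1 : ∀ β, IsZigzagKnightPath β →
        φ (Estep :: Ebar :: β) = 1 :: (φ β ++ [-1]))
    (h2 : ∀ β, IsZigzagKnightPath β →
        φ (Nstep :: Nbar :: β) = 1 :: -1 :: φ β)
    (h3 : ∀ β γ, IsZigzagKnightPath β → IsZigzagKnightPath γ →
        φ (Nstep :: Ebar :: (β ++ Estep :: Nbar :: γ)) = 1 :: (φ β ++ -1 :: φ γ)) :
    (∀ p, IsZigzagKnightPath p → IsDyck (φ p)) ∧
    Set.InjOn φ {p | IsZigzagKnightPath p} := by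
  have hφ : IsFirstReturnCoding φ := by
    rintro (_ | β) (_ | γ) hβ hγ
    · simpa [zigzagJoin] using h0
    · simpa [zigzagJoin] using h2 γ (hγ γ rfl)
    · simpa [zigzagJoin] using h1 β (hβ β rfl)
    · simpa [zigzagJoin] using h3 β γ (hβ β rfl) (hγ γ rfl)
  exact ⟨fun p => hφ.isDyck, hφ.injOn⟩
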